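/- arXiv:0912.1502 — 3 statements merged into one kernel-verified Lean document; each statement's English description precedes it below -/
import Mathlib

section
/- Let K be a field, K[X] = K[x_1,…,x_n], I ⊆ K[X] a zero-dimensional ideal, and d = dim_K K[X]/I. Then the quotient vector space ⟨T^n_{≤d−1}⟩_K / I^{≤d−1} is isomorphic as a K-vector space to K[X]/I; in particular dim_K ⟨T^n_{≤d−1}⟩_K − dim_K I^{≤d−1} = d. -/
open MvPolynomial

/-- Total degree of a monomial given by its exponent vector. -/
def mdeg {n : ℕ} (m : Fin n →₀ ℕ) : ℕ := m.sum fun _ k => k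

/-- The set `T^n_{≤i}` of monomials of total degree at most `i` (indexed by
`i : ℤ`, so that `T^n_{≤-1} = ∅`). -/
def degLEZ (n : ℕ) (i : ℤ) : Set (Fin n →₀ ℕ) := {m | (mdeg m : ℤ) ≤ i}

/-- The `K`-vector subspace of `K[X]` spanned by a set of monomials. -/
noncomputable def monSpan (K : Type*) [Field K] {n : ℕ} (O : Set (Fin n →₀ ℕ)) :
    Submodule K (MvPolynomial (Fin n) K) :=
  Submodule.span K ((fun m => (monomial m (1 : K))) '' O)

/-- The degree filtration `I^{≤i} = {p ∈ I : deg p ≤ i}` of an ideal `I`,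
as a `K`-subspace of `K[X]`. -/
noncomputable def Ile {n : ℕ} {K : Type*} [Field K]
    (I : Ideal (MvPolynomial (Fin n) K)) (i : ℤ) : Submodule K (MvPolynomial (Fin n) K) :=
  Submodule.restrictScalars K I ⊓ monSpan K (degLEZ n i)

/-!
Let `A = K[X]/I` and let `N ⊆ A` be the image of the polynomials of degree at most one. The image
of `⟨T^n_{≤i}⟩_K` in `A` is the power `N ^ i` of subspaces of `A`. These powers increase and
exhaust `A`, and since `N ^ (i + 1) = N ^ i * N`, once two consecutive powers agree all later ones
do, so they equal `A`. Hence the dimension grows strictly until `N ^ i = A`, starting from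
`dim N ^ 0 = 1`, which forces `N ^ (d - 1) = A`. The statement is then the first isomorphism
theorem for `K[X] → A` restricted to `⟨T^n_{≤d-1}⟩_K`, whose kernel is `I^{≤d-1}`.
-/

open Module Submodule
open scoped Pointwise

theorem pow_eq_of_pow_succ_eq {M : Type*} [Monoid M] {a : M} {i j : ℕ}
    (h : a ^ (i + 1) = a ^ i) (hij : i ≤ j) : a ^ j = a ^ i := by
  induction j, hij using Nat.le_induction with
  | base => rfl
  | succ j _ ih => rw [pow_succ, ih, ← pow_succ, h]

theorem Nat.Iic_add_Iic (a b : ℕ) : Set.Iic a + Set.Iic b = Set.Iic (a + b) := by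
  refine (Set.Iic_add_Iic_subset a b).antisymm fun x hx => ?_
  simp only [Set.mem_Iic] at hx
  exact ⟨min x a, min_le_right x a, x - min x a, by simp only [Set.mem_Iic]; omega,
    Nat.add_sub_of_le (min_le_left x a)⟩

namespace Submodule

section Semiring

variable {R A : Type*} [CommSemiring R] [Semiring A] [Algebra R A] {N : Submodule R A}

theorem pow_eq_top_of_pow_succ_eq (hone : 1 ≤ N) (hexhaust : ∀ a : A, ∃ i, a ∈ N ^ i) {i : ℕ}
    (h : N ^ (i + 1) = N ^ i) : N ^ i = ⊤ := by
  refine eq_top_iff'.2 fun a => ?_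
  obtain ⟨j, hj⟩ := hexhaust a
  rcases le_total j i with hji | hij
  · exact pow_le_pow_right' hone hji hj
  · rwa [← pow_eq_of_pow_succ_eq h hij]

end Semiring

variable {K A : Type*} [Field K] [Ring A] [Algebra K A] {N : Submodule K A}

theorem pow_eq_top_or_succ_le_finrank [FiniteDimensional K A] (hone : 1 ≤ N)
    (hexhaust : ∀ a : A, ∃ i, a ∈ N ^ i) (i : ℕ) : N ^ i = ⊤ ∨ i + 1 ≤ finrank K ↥(N ^ i) := by
  induction i with
  | zero =>
    rcases subsingleton_or_nontrivial A with hA | hA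
    · exact Or.inl (Subsingleton.elim _ _)
    · refine Or.inr (Nat.one_le_iff_ne_zero.2 fun h => one_ne_zero (α := A) ?_)
      rw [pow_zero, finrank_eq_zero] at h
      exact (mem_bot K).1 (h ▸ one_le.1 le_rfl)
  | succ i ih =>
    have hmono : N ^ i ≤ N ^ (i + 1) := pow_le_pow_right' hone i.le_succ
    rcases ih with htop | hlt
    · exact Or.inl (top_unique (htop ▸ hmono))
    by_cases heq : N ^ (i + 1) = N ^ i
    · exact Or.inl (heq ▸ pow_eq_top_of_pow_succ_eq hone hexhaust heq)
    · have := finrank_lt_finrank_of_lt (lt_of_le_of_ne hmono (Ne.symm heq))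
      exact Or.inr (by omega)

theorem pow_finrank_sub_one_eq_top [FiniteDimensional K A] (hone : 1 ≤ N)
    (hexhaust : ∀ a : A, ∃ i, a ∈ N ^ i) : N ^ (finrank K A - 1) = ⊤ := by
  rcases pow_eq_top_or_succ_le_finrank hone hexhaust (finrank K A - 1) with h | h
  · exact h
  · have := finrank_le (N ^ (finrank K A - 1))
    exact eq_top_of_finrank_eq (by omega)

end Submodule

namespace MvPolynomial

variable {σ R : Type*} [CommSemiring R]

theorem restrictTotalDegree_eq_restrictSupport (m : ℕ) :
    restrictTotalDegree σ R m = restrictSupport R (Finsupp.degree ⁻¹' Set.Iic m) :=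
  rfl

theorem restrictTotalDegree_zero : restrictTotalDegree σ R 0 = 1 := by
  rw [restrictTotalDegree_eq_restrictSupport, ← restrictSupport_zero]
  congr
  ext m
  simp [Finsupp.degree_eq_zero_iff]

theorem restrictTotalDegree_add (a b : ℕ) :
    restrictTotalDegree σ R (a + b) = restrictTotalDegree σ R a * restrictTotalDegree σ R b := by
  simp only [restrictTotalDegree_eq_restrictSupport, ← Nat.Iic_add_Iic,
    Finsupp.degree_preimage_add, restrictSupport_add]

theorem restrictTotalDegree_eq_pow (k : ℕ) :
    restrictTotalDegree σ R k = restrictTotalDegree σ R 1 ^ k := by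
  induction k with
  | zero => rw [pow_zero, restrictTotalDegree_zero]
  | succ k ih => rw [pow_succ, ← ih, restrictTotalDegree_add]

theorem map_restrictTotalDegree_finrank_sub_one_eq_top {K : Type*} [Field K]
    (I : Ideal (MvPolynomial σ K)) [FiniteDimensional K (MvPolynomial σ K ⧸ I)] :
    (restrictTotalDegree σ K (finrank K (MvPolynomial σ K ⧸ I) - 1)).map
      (Ideal.Quotient.mkₐ K I).toLinearMap = ⊤ := by
  rw [restrictTotalDegree_eq_pow, Submodule.map_pow]
  refine pow_finrank_sub_one_eq_top
    (Submodule.one_le.2 ⟨1, ?_, map_one (Ideal.Quotient.mkₐ K I)⟩) fun a => ?_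
  · exact (mem_restrictTotalDegree σ 1 (1 : MvPolynomial σ K)).2 (by simp)
  · obtain ⟨p, rfl⟩ := Ideal.Quotient.mk_surjective a
    refine ⟨p.totalDegree, ?_⟩
    rw [← Submodule.map_pow, ← restrictTotalDegree_eq_pow]
    exact mem_map_of_mem ((mem_restrictTotalDegree σ _ p).2 le_rfl)

end MvPolynomial

namespace LinearMap

section Ring

variable {R V W : Type*} [Ring R] [AddCommGroup V] [Module R V] [AddCommGroup W] [Module R W]
  (g : V →ₗ[R] W) {U : Submodule R V}

theorem ker_domRestrict_eq_comap_inf : ker (g.domRestrict U) = (ker g ⊓ U).comap U.subtype := by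
  rw [ker_domRestrict, comap_inf, comap_subtype_self, inf_top_eq]

noncomputable def quotientInfKerEquivOfMapEqTop (h : U.map g = ⊤) :
    (U ⧸ (ker g ⊓ U).comap U.subtype) ≃ₗ[R] W :=
  (quotEquivOfEq _ _ (ker_domRestrict_eq_comap_inf g).symm).trans
    ((g.domRestrict U).quotKerEquivOfSurjective (by rwa [← range_eq_top, range_domRestrict]))

end Ring

variable {K V W : Type*} [Field K] [AddCommGroup V] [Module K V] [AddCommGroup W] [Module K W]
  (g : V →ₗ[K] W) {U : Submodule K V}

theorem finrank_sub_finrank_inf_ker [FiniteDimensional K U] (h : U.map g = ⊤) :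
    finrank K U - finrank K ↥(ker g ⊓ U) = finrank K W := by
  have := (g.domRestrict U).finrank_range_add_finrank_ker
  rw [range_domRestrict, h, finrank_top, ker_domRestrict_eq_comap_inf,
    (comapSubtypeEquivOfLe inf_le_right).finrank_eq] at this
  omega

end LinearMap

theorem monSpan_eq_restrictSupport (K : Type*) [Field K] {n : ℕ} (O : Set (Fin n →₀ ℕ)) :
    monSpan K O = restrictSupport K O :=
  (restrictSupport_eq_span K O).symm

theorem monSpan_degLEZ_le_restrictTotalDegree (K : Type*) [Field K] (n : ℕ) (i : ℤ) :
    monSpan K (degLEZ n i) ≤ restrictTotalDegree (Fin n) K i.toNat := by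
  rw [monSpan_eq_restrictSupport]
  refine restrictSupport_mono K fun m (hm : (mdeg m : ℤ) ≤ i) => ?_
  show mdeg m ≤ i.toNat
  omega

theorem monSpan_degLEZ_natCast (K : Type*) [Field K] (n k : ℕ) :
    monSpan K (degLEZ n k) = restrictTotalDegree (Fin n) K k := by
  rw [monSpan_eq_restrictSupport, restrictTotalDegree]
  congr
  ext m
  exact Nat.cast_le (α := ℤ)

instance (K : Type*) [Field K] (n : ℕ) (i : ℤ) : FiniteDimensional K (monSpan K (degLEZ n i)) :=
  Submodule.finiteDimensional_of_le (monSpan_degLEZ_le_restrictTotalDegree K n i)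

theorem map_monSpan_degLEZ_finrank_sub_one_eq_top {n : ℕ} {K : Type*} [Field K]
    (I : Ideal (MvPolynomial (Fin n) K)) [FiniteDimensional K (MvPolynomial (Fin n) K ⧸ I)] :
    (monSpan K (degLEZ n ((finrank K (MvPolynomial (Fin n) K ⧸ I) : ℤ) - 1))).map
      (Ideal.Quotient.mkₐ K I).toLinearMap = ⊤ := by
  rcases Nat.eq_zero_or_pos (finrank K (MvPolynomial (Fin n) K ⧸ I)) with h0 | hpos
  · have := finrank_zero_iff.1 h0
    exact Subsingleton.elim _ _
  · rw [show (finrank K (MvPolynomial (Fin n) K ⧸ I) : ℤ) - 1 =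
        ((finrank K (MvPolynomial (Fin n) K ⧸ I) - 1 : ℕ) : ℤ) by omega,
      monSpan_degLEZ_natCast]
    exact map_restrictTotalDegree_finrank_sub_one_eq_top I

theorem Ile_eq_ker_inf {n : ℕ} {K : Type*} [Field K] (I : Ideal (MvPolynomial (Fin n) K))
    (i : ℤ) :
    Ile I i = LinearMap.ker (Ideal.Quotient.mkₐ K I).toLinearMap ⊓ monSpan K (degLEZ n i) := by
  rw [Ile]
  congr
  ext p
  simp [Ideal.Quotient.eq_zero_iff_mem]

/-- for a zero-dimensional ideal `I` with `d = dim_K K[X]/I`,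
the quotient `⟨T^n_{≤d-1}⟩_K / I^{≤d-1}` is `K`-linearly isomorphic to
`K[X]/I`; in particular `dim ⟨T^n_{≤d-1}⟩_K - dim I^{≤d-1} = d`. -/
theorem monSpan_quotient_Ile_iso {n : ℕ} {K : Type*} [Field K]
    (I : Ideal (MvPolynomial (Fin n) K))
    (hI : FiniteDimensional K (MvPolynomial (Fin n) K ⧸ I))
    (d : ℕ) (hd : d = Module.finrank K (MvPolynomial (Fin n) K ⧸ I)) :
    Nonempty ((↥(monSpan K (degLEZ n ((d : ℤ) - 1))) ⧸
        Submodule.comap (monSpan K (degLEZ n ((d : ℤ) - 1))).subtype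
          (Ile I ((d : ℤ) - 1))) ≃ₗ[K]
      (MvPolynomial (Fin n) K ⧸ I)) ∧
    Module.finrank K ↥(monSpan K (degLEZ n ((d : ℤ) - 1))) -
      Module.finrank K ↥(Ile I ((d : ℤ) - 1)) = d := by
  subst hd
  have hsurj := map_monSpan_degLEZ_finrank_sub_one_eq_top I
  rw [Ile_eq_ker_inf]
  exact ⟨⟨LinearMap.quotientInfKerEquivOfMapEqTop _ hsurj⟩,
    LinearMap.finrank_sub_finrank_inf_ker _ hsurj⟩
end

section
/- Let K be a field, K[X] = K[x_1,…,x_n], I ⊆ K[X] a zero-dimensional ideal, and d = dim_K K[X]/I. For a 0/1 vector z = (z_m)_{m ∈ T^n_{≤d−1}} let O(z) = {m ∈ T^n_{≤d−1} : z_m = 1}. Then z satisfies (i) z_{m_1} ≥ z_{m_2} for all m_1, m_2 ∈ T^n_{≤d−1} with m_1 ∣ m_2, (ii) Σ_{m ∈ T^n_{≤d−1}} z_m = d, and (iii) Σ_{m ∈ U} z_m ≤ dim_K (⟨U⟩_K + I)/I for every subset U ⊆ T^n_{≤d−1} with |U| = d, if and only if O(z) is an order ideal supporting a border basis of I. Consequently,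 z ↦ O(z) is a bijection between the integral points of the order ideal polytope of I and the order ideals supporting a border basis of I. -/
open MvPolynomial

/-- An order ideal: a finite set of monomials (represented by their exponent
vectors) closed under divisibility (`t' ∣ t` corresponds to `t' ≤ t`). -/
def IsOrderIdeal {n : ℕ} (O : Set (Fin n →₀ ℕ)) : Prop :=
  O.Finite ∧ ∀ t ∈ O, ∀ t' : Fin n →₀ ℕ, t' ≤ t → t' ∈ O

/-!
For a `0/1` vector `z` with support `S`, condition (i) together with the degree bound says that
`S` is an order ideal, and (ii) says `#S = d`. Let `π : K[X] → K[X]/I` be the quotient map, whose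
kernel is `I`. Then `K[X] = I ⊕ ⟨S⟩_K` holds iff `π` maps `⟨S⟩_K` isomorphically onto `K[X]/I`,
i.e. iff `dim π⟨S⟩_K = #S = d`; condition (iii) at `U = S` provides `dim π⟨S⟩_K ≥ d`. Conversely,
if `π` is injective on `⟨S⟩_K`, then `∑_{m ∈ U} z_m = #(U ∩ S) = dim π⟨U ∩ S⟩_K ≤ dim π⟨U⟩_K`.
A monomial of an order ideal of size `d` has divisors of every degree up to its own, so its degree
is below `d`; this makes `z ↦ O(z)` onto.
-/

lemma mdeg_eq_degree {n : ℕ} (m : Fin n →₀ ℕ) : mdeg m = m.degree := rfl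

open Finset in
lemma IsOrderIdeal.degree_lt_card {n : ℕ} {S : Finset (Fin n →₀ ℕ)}
    (hS : IsOrderIdeal (S : Set (Fin n →₀ ℕ))) {m : Fin n →₀ ℕ} (hm : m ∈ S) :
    m.degree < #S := by
  have hdeg : range (m.degree + 1) ⊆ S.image Finsupp.degree := fun k hk => by
    obtain ⟨t, htm, rfl⟩ := m.exists_le_degree_eq k (Nat.lt_succ_iff.1 (mem_range.1 hk))
    exact mem_image_of_mem _ (hS.2 m hm t htm)
  calc m.degree < #(range (m.degree + 1)) := by simp
    _ ≤ #(S.image Finsupp.degree) := card_le_card hdeg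
    _ ≤ #S := card_image_le

namespace Finsupp

open Finset

variable {α : Type*} {z : α →₀ ℕ}

lemma setOf_eq_one_eq_support (hz : ∀ a, z a ≤ 1) : {a | z a = 1} = z.support := by
  ext a
  have := hz a
  simp only [Set.mem_ofPred_eq, mem_coe, mem_support_iff]
  omega

lemma sum_eq_card_inter_support [DecidableEq α] (hz : ∀ a, z a ≤ 1) (U : Finset α) :
    ∑ a ∈ U, z a = #(U ∩ z.support) := by
  rw [← filter_mem_eq_inter, card_filter]
  refine Finset.sum_congr rfl fun a _ => ?_
  rcases Nat.le_one_iff_eq_zero_or_eq_one.1 (hz a) with ha | ha <;> simp [ha]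

lemma sum_id_eq_card_support (hz : ∀ a, z a ≤ 1) : (z.sum fun _ v => v) = #z.support := by
  classical
  rw [Finsupp.sum, sum_eq_card_inter_support hz, inter_self]

lemma eq_of_setOf_eq_one {z' : α →₀ ℕ} (hz : ∀ a, z a ≤ 1) (hz' : ∀ a, z' a ≤ 1)
    (h : {a | z a = 1} = {a | z' a = 1}) : z = z' := by
  ext a
  have := hz a
  have := hz' a
  have := Set.ext_iff.1 h a
  simp only [Set.mem_ofPred_eq] at this
  omega

lemma exists_setOf_eq_one_eq (S : Finset α) :
    ∃ z : α →₀ ℕ, (∀ a, z a ≤ 1) ∧ {a | z a = 1} = S := by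
  classical
  refine ⟨Multiset.toFinsupp S.val, fun a => ?_, ?_⟩
  · rw [Multiset.toFinsupp_apply, Multiset.count_eq_of_nodup S.nodup]
    split_ifs <;> omega
  · ext a
    simp [Multiset.count_eq_of_nodup S.nodup]

end Finsupp

section LinearAlgebra

open Module Submodule

variable {K V W : Type*} [Field K] [AddCommGroup V] [Module K V] [AddCommGroup W] [Module K W]
  {q : Submodule K V} [FiniteDimensional K q]

lemma LinearMap.finrank_map_eq_iff_disjoint_ker (f : V →ₗ[K] W) :
    finrank K (q.map f) = finrank K q ↔ Disjoint q (LinearMap.ker f) := by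
  rw [← LinearMap.injective_domRestrict_iff, ← LinearMap.ker_eq_bot, ← Submodule.finrank_eq_zero,
    ← LinearMap.range_domRestrict]
  have := (f.domRestrict q).finrank_range_add_finrank_ker
  omega

lemma LinearMap.isCompl_ker_iff_finrank_map {f : V →ₗ[K] W} (hf : Function.Surjective f)
    [FiniteDimensional K W] :
    IsCompl (LinearMap.ker f) q ↔
      finrank K (q.map f) = finrank K q ∧ finrank K (q.map f) = finrank K W := by
  rw [isCompl_iff, codisjoint_iff, sup_comm, ← map_eq_top_iff (LinearMap.range_eq_top.2 hf),
    f.finrank_map_eq_iff_disjoint_ker, disjoint_comm]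
  exact and_congr_right fun _ =>
    ⟨fun htop => by rw [htop, finrank_top], eq_top_of_finrank_eq⟩

end LinearAlgebra

lemma Ideal.Quotient.ker_mkₐ_toLinearMap (K : Type*) {A : Type*} [CommRing K] [CommRing A]
    [Algebra K A] (I : Ideal A) :
    LinearMap.ker (Ideal.Quotient.mkₐ K I).toLinearMap = I.restrictScalars K := by
  ext x
  simp [Ideal.Quotient.eq_zero_iff_mem]

section MonomialSpan

open Module

variable {n : ℕ} {K : Type*} [Field K]

lemma monSpan_mono {s t : Set (Fin n →₀ ℕ)} (h : s ⊆ t) : monSpan K s ≤ monSpan K t :=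
  Submodule.span_mono (Set.image_mono h)

instance (S : Finset (Fin n →₀ ℕ)) : FiniteDimensional K (monSpan K (S : Set (Fin n →₀ ℕ))) :=
  FiniteDimensional.span_of_finite K (S.finite_toSet.image _)

lemma finrank_monSpan (S : Finset (Fin n →₀ ℕ)) :
    finrank K (monSpan K (S : Set (Fin n →₀ ℕ))) = S.card := by
  have hli : LinearIndependent K fun m : (S : Set (Fin n →₀ ℕ)) => monomial (R := K) m.1 1 :=
    (coe_basisMonomials (Fin n) K ▸ (basisMonomials (Fin n) K).linearIndependent).comp _
      Subtype.val_injective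
  rw [monSpan, Set.image_eq_range, finrank_span_eq_card hli]
  simp only [Finset.coe_sort_coe, Fintype.card_coe]

end MonomialSpan

section OrderIdealPolytope

open Module Finset

variable {n : ℕ} {K : Type*} [Field K]

def SupportsBorderBasis (I : Ideal (MvPolynomial (Fin n) K)) (O : Set (Fin n →₀ ℕ)) : Prop :=
  IsOrderIdeal O ∧ IsCompl (Submodule.restrictScalars K I) (monSpan K O)

def OrderIdealPolytopeConditions (I : Ideal (MvPolynomial (Fin n) K)) (d : ℕ)
    (z : (Fin n →₀ ℕ) →₀ ℕ) : Prop :=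
  (∀ m₁ m₂ : Fin n →₀ ℕ, mdeg m₁ ≤ d - 1 → mdeg m₂ ≤ d - 1 → m₁ ≤ m₂ → z m₂ ≤ z m₁) ∧
    (z.sum fun _ v => v) = d ∧
    (∀ U : Finset (Fin n →₀ ℕ), (∀ m ∈ U, mdeg m ≤ d - 1) → U.card = d →
      (∑ m ∈ U, z m) ≤ finrank K
        ↥(Submodule.map (Ideal.Quotient.mkₐ K I).toLinearMap
          (monSpan K (U : Set (Fin n →₀ ℕ)))))

variable (I : Ideal (MvPolynomial (Fin n) K)) {S : Finset (Fin n →₀ ℕ)}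

lemma card_eq_finrank_quotient_of_isCompl [FiniteDimensional K (MvPolynomial (Fin n) K ⧸ I)]
    (hS : IsCompl (I.restrictScalars K) (monSpan K (S : Set (Fin n →₀ ℕ)))) :
    #S = finrank K (MvPolynomial (Fin n) K ⧸ I) := by
  rw [← Ideal.Quotient.ker_mkₐ_toLinearMap K I,
    LinearMap.isCompl_ker_iff_finrank_map (Ideal.Quotient.mkₐ_surjective K I),
    finrank_monSpan] at hS
  omega

lemma card_inter_le_finrank_map_monSpan
    (hS : IsCompl (I.restrictScalars K) (monSpan K (S : Set (Fin n →₀ ℕ))))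
    (U : Finset (Fin n →₀ ℕ)) :
    #(U ∩ S) ≤ finrank K ((monSpan K (U : Set (Fin n →₀ ℕ))).map
      (Ideal.Quotient.mkₐ K I).toLinearMap) := by
  let π := (Ideal.Quotient.mkₐ K I).toLinearMap
  have hdis : Disjoint (monSpan K (↑(U ∩ S) : Set (Fin n →₀ ℕ))) (LinearMap.ker π) := by
    rw [Ideal.Quotient.ker_mkₐ_toLinearMap]
    exact hS.disjoint.symm.mono_left (monSpan_mono (by simp))
  calc #(U ∩ S) = finrank K ((monSpan K (↑(U ∩ S) : Set (Fin n →₀ ℕ))).map π) := by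
        rw [(π.finrank_map_eq_iff_disjoint_ker).2 hdis, finrank_monSpan]
    _ ≤ finrank K ((monSpan K (U : Set (Fin n →₀ ℕ))).map π) :=
        Submodule.finrank_mono (Submodule.map_mono (monSpan_mono (by simp)))

lemma isCompl_monSpan_of_card_le_finrank_map
    [FiniteDimensional K (MvPolynomial (Fin n) K ⧸ I)]
    (hS : #S = finrank K (MvPolynomial (Fin n) K ⧸ I))
    (hmap : #S ≤ finrank K ((monSpan K (S : Set (Fin n →₀ ℕ))).map
      (Ideal.Quotient.mkₐ K I).toLinearMap)) :
    IsCompl (I.restrictScalars K) (monSpan K (S : Set (Fin n →₀ ℕ))) := by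
  have hle := Submodule.finrank_map_le (Ideal.Quotient.mkₐ K I).toLinearMap
    (monSpan K (S : Set (Fin n →₀ ℕ)))
  rw [finrank_monSpan] at hle
  rw [← Ideal.Quotient.ker_mkₐ_toLinearMap K I,
    LinearMap.isCompl_ker_iff_finrank_map (Ideal.Quotient.mkₐ_surjective K I), finrank_monSpan]
  omega

variable {I} [FiniteDimensional K (MvPolynomial (Fin n) K ⧸ I)] {d : ℕ} {z : (Fin n →₀ ℕ) →₀ ℕ}

lemma orderIdealPolytopeConditions_of_supportsBorderBasis
    (hd : d = finrank K (MvPolynomial (Fin n) K ⧸ I)) (hz : ∀ m, z m ≤ 1)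
    (h : SupportsBorderBasis I {m | z m = 1}) : OrderIdealPolytopeConditions I d z := by
  obtain ⟨hO, hC⟩ := h
  rw [Finsupp.setOf_eq_one_eq_support hz] at hC
  have hcard := card_eq_finrank_quotient_of_isCompl I hC
  refine ⟨fun m₁ m₂ _ _ hle => ?_, by rw [Finsupp.sum_id_eq_card_support hz, hcard, hd],
    fun U _ _ => (Finsupp.sum_eq_card_inter_support hz U).trans_le
      (card_inter_le_finrank_map_monSpan I hC U)⟩
  rcases Nat.le_one_iff_eq_zero_or_eq_one.1 (hz m₂) with h₂ | h₂
  · simp [h₂]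
  · exact (hO.2 m₂ h₂ m₁ hle).symm ▸ h₂.le

lemma supportsBorderBasis_of_orderIdealPolytopeConditions
    (hd : d = finrank K (MvPolynomial (Fin n) K ⧸ I)) (hz : ∀ m, z m ≤ 1)
    (hdeg : ∀ m, z m ≠ 0 → mdeg m ≤ d - 1) (h : OrderIdealPolytopeConditions I d z) :
    SupportsBorderBasis I {m | z m = 1} := by
  obtain ⟨hmono, hsum, hrank⟩ := h
  rw [Finsupp.sum_id_eq_card_support hz] at hsum
  rw [Finsupp.setOf_eq_one_eq_support hz]
  refine ⟨⟨z.support.finite_toSet, fun t ht t' hle => ?_⟩, ?_⟩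
  · have hzt : z t ≠ 0 := Finsupp.mem_support_iff.1 ht
    have := hmono t' t ((Finsupp.degree_mono hle).trans (hdeg t hzt)) (hdeg t hzt) hle
    exact Finsupp.mem_support_iff.2 (by omega)
  · refine isCompl_monSpan_of_card_le_finrank_map I (hsum.trans hd) ?_
    have := hrank z.support (fun m hm => hdeg m (Finsupp.mem_support_iff.1 hm)) hsum
    rwa [Finsupp.sum_eq_card_inter_support hz, inter_self] at this

lemma mdeg_le_of_supportsBorderBasis
    (hd : d = finrank K (MvPolynomial (Fin n) K ⧸ I)) (hz : ∀ m, z m ≤ 1)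
    (h : SupportsBorderBasis I {m | z m = 1}) (m : Fin n →₀ ℕ) (hm : z m ≠ 0) :
    mdeg m ≤ d - 1 := by
  obtain ⟨hO, hC⟩ := h
  rw [Finsupp.setOf_eq_one_eq_support hz] at hO hC
  have hcard := card_eq_finrank_quotient_of_isCompl I hC
  have := hO.degree_lt_card (Finsupp.mem_support_iff.2 hm)
  rw [mdeg_eq_degree]
  omega

end OrderIdealPolytope

/-- for a zero-dimensional ideal `I` with `d = dim_K K[X]/I`,
a finitely supported `0/1` vector `z` indexed by `T^n_{≤d-1}` satisfies the
three conditions defining the order ideal polytope iff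
`O(z) = {m : z m = 1}` is an order ideal supporting a border basis of `I`;
consequently `z ↦ O(z)` is a bijection between the integral points of the
order ideal polytope and the order ideals supporting a border basis of `I`. -/
theorem orderIdealPolytope_integral_points {n : ℕ} {K : Type*} [Field K]
    (I : Ideal (MvPolynomial (Fin n) K))
    (hI : FiniteDimensional K (MvPolynomial (Fin n) K ⧸ I))
    (d : ℕ) (hd : d = Module.finrank K (MvPolynomial (Fin n) K ⧸ I)) :
    (∀ z : (Fin n →₀ ℕ) →₀ ℕ, (∀ m, z m ≤ 1) → (∀ m, z m ≠ 0 → mdeg m ≤ d - 1) →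
      (((∀ m₁ m₂ : Fin n →₀ ℕ, mdeg m₁ ≤ d - 1 → mdeg m₂ ≤ d - 1 → m₁ ≤ m₂ →
            z m₂ ≤ z m₁) ∧
        (z.sum fun _ v => v) = d ∧
        (∀ U : Finset (Fin n →₀ ℕ), (∀ m ∈ U, mdeg m ≤ d - 1) → U.card = d →
          (∑ m ∈ U, z m) ≤ Module.finrank K
            ↥(Submodule.map (Ideal.Quotient.mkₐ K I).toLinearMap
              (monSpan K (U : Set (Fin n →₀ ℕ)))))) ↔
       (IsOrderIdeal {m : Fin n →₀ ℕ | z m = 1} ∧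
        IsCompl (Submodule.restrictScalars K I) (monSpan K {m : Fin n →₀ ℕ | z m = 1})))) ∧
    Set.BijOn (fun z : (Fin n →₀ ℕ) →₀ ℕ => {m : Fin n →₀ ℕ | z m = 1})
      {z : (Fin n →₀ ℕ) →₀ ℕ |
        (∀ m, z m ≤ 1) ∧ (∀ m, z m ≠ 0 → mdeg m ≤ d - 1) ∧
        (∀ m₁ m₂ : Fin n →₀ ℕ, mdeg m₁ ≤ d - 1 → mdeg m₂ ≤ d - 1 → m₁ ≤ m₂ →
          z m₂ ≤ z m₁) ∧
        (z.sum fun _ v => v) = d ∧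
        (∀ U : Finset (Fin n →₀ ℕ), (∀ m ∈ U, mdeg m ≤ d - 1) → U.card = d →
          (∑ m ∈ U, z m) ≤ Module.finrank K
            ↥(Submodule.map (Ideal.Quotient.mkₐ K I).toLinearMap
              (monSpan K (U : Set (Fin n →₀ ℕ)))))}
      {O : Set (Fin n →₀ ℕ) | IsOrderIdeal O ∧
        IsCompl (Submodule.restrictScalars K I) (monSpan K O)} := by
  refine ⟨fun z hz hdeg => ⟨supportsBorderBasis_of_orderIdealPolytopeConditions hd hz hdeg,
      orderIdealPolytopeConditions_of_supportsBorderBasis hd hz⟩, ?_, ?_, ?_⟩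
  · rintro z ⟨hz, hdeg, h⟩
    exact supportsBorderBasis_of_orderIdealPolytopeConditions hd hz hdeg h
  · rintro z ⟨hz, -⟩ z' ⟨hz', -⟩ h
    exact Finsupp.eq_of_setOf_eq_one hz hz' h
  · rintro O hO
    obtain ⟨z, hz, hzO⟩ := Finsupp.exists_setOf_eq_one_eq hO.1.1.toFinset
    rw [Set.Finite.coe_toFinset] at hzO
    have h : SupportsBorderBasis I {m | z m = 1} := hzO ▸ hO
    exact ⟨z, ⟨hz, mdeg_le_of_supportsBorderBasis hd hz h,
      orderIdealPolytopeConditions_of_supportsBorderBasis hd hz h⟩, hzO⟩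
end

section
/- Let K be a field of characteristic zero and I = ⟨x_2^2 + x_1 x_2 + x_1^2, x_1 x_2^2, x_2^4⟩ ⊆ K[x_1, x_2]. Then the set O' = {1, x_1, x_2, x_1^2, x_2^2, x_2^3} is an order ideal supporting a border basis of I, yet there is no term ordering (monomial order) σ on the monomials in x_1, x_2 such that O' equals the set of monomials not lying in the leading-term ideal ⟨LT_σ(I)⟩ of I; that is, O' does not come from any term ordering. -/
open MvPolynomial

/-- The ideal `I = ⟨x_2² + x_1x_2 + x_1², x_1x_2², x_2⁴⟩` of `K[x_1,x_2]`
(with `x_1 = X 0`, `x_2 = X 1`). -/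
noncomputable def I18 (K : Type*) [Field K] : Ideal (MvPolynomial (Fin 2) K) :=
  Ideal.span {X 1 ^ 2 + X 0 * X 1 + X 0 ^ 2, X 0 * X 1 ^ 2, X 1 ^ 4}

/-- The order ideal `O' = {1, x_1, x_2, x_1², x_2², x_2³}` (as exponent
vectors). -/
def Oex : Set (Fin 2 →₀ ℕ) :=
  {0, Finsupp.single (0 : Fin 2) 1, Finsupp.single (1 : Fin 2) 1,
   Finsupp.single (0 : Fin 2) 2, Finsupp.single (1 : Fin 2) 2,
   Finsupp.single (1 : Fin 2) 3}

/-- A term ordering: a linear order on monomials (given as a `≤`-like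
relation `r`) compatible with multiplication and having `1` as least
element. -/
def IsTermOrder (r : (Fin 2 →₀ ℕ) → (Fin 2 →₀ ℕ) → Prop) : Prop :=
  IsLinearOrder (Fin 2 →₀ ℕ) r ∧ (∀ a b c, r a b → r (a + c) (b + c)) ∧ ∀ a, r 0 a

/-- The leading term ideal `⟨LT_σ(I)⟩`: the monomial ideal generated by the
`σ`-largest monomials of the supports of the nonzero elements of `I`. -/
noncomputable def LTIdeal (K : Type*) [Field K]
    (r : (Fin 2 →₀ ℕ) → (Fin 2 →₀ ℕ) → Prop) (I : Ideal (MvPolynomial (Fin 2) K)) :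
    Ideal (MvPolynomial (Fin 2) K) :=
  Ideal.span ((fun m => monomial m (1 : K)) ''
    {m : Fin 2 →₀ ℕ | ∃ p ∈ I, p ≠ 0 ∧ m ∈ p.support ∧ ∀ m' ∈ p.support, r m' m})

/-!
Let `N` be the linear map sending `x₁ᵃx₂ᵇ` to its reduction in `⟨O'⟩`: `x₁x₂ ↦ -(x₁² + x₂²)`,
`x₁²x₂ ↦ -x₂³`, `x₁³ ↦ x₂³`, the monomials of `O'` to themselves and everything else to `0`.
Each monomial is congruent to its image modulo `I`, and `N` kills every monomial multiple of a
generator, so `N` is a projection onto `⟨O'⟩` with kernel `I`; hence `K[x₁,x₂] = I ⊕ ⟨O'⟩`.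

No term ordering yields `O'`: `g = x₂² + x₁x₂ + x₁² ∈ I`, and if say `x₁ ≤ x₂` then
`x₁² ≤ x₁x₂ ≤ x₂²`, so the leading term of `g` is `x₁²` or `x₂²`, both of which lie in `O'`.
-/

lemma monomial_one_eq_X_pow_mul_X_pow {R : Type*} [CommSemiring R] (m : Fin 2 →₀ ℕ) :
    (monomial m 1 : MvPolynomial (Fin 2) R) = X 0 ^ m 0 * X 1 ^ m 1 := by
  rw [monomial_eq, C_1, one_mul, Finsupp.prod_fintype _ _ (by simp), Fin.prod_univ_two]

lemma MvPolynomial.restrictScalars_ideal_span_le_ker {σ R M : Type*} [CommSemiring R]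
    [AddCommMonoid M] [Module R M] (f : MvPolynomial σ R →ₗ[R] M) {S : Set (MvPolynomial σ R)}
    (h : ∀ m, ∀ g ∈ S, f (monomial m 1 * g) = 0) :
    (Ideal.span S).restrictScalars R ≤ LinearMap.ker f := by
  suffices ∀ p ∈ Ideal.span S, ∀ q, f (q * p) = 0 from fun p hp ↦ by simpa using this p hp 1
  intro p hp
  induction hp using Submodule.span_induction with
  | mem g hg =>
    intro q
    induction q using MvPolynomial.induction_on' with
    | monomial m c =>
      rw [← mul_one c, ← C_mul_monomial, mul_assoc, ← smul_eq_C_mul, map_smul, h m g hg,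
        smul_zero]
    | add q q' hq hq' => rw [add_mul, map_add, hq, hq', add_zero]
  | zero => simp
  | add p p' _ _ hp hp' => intro q; rw [mul_add, map_add, hp, hp', add_zero]
  | smul c p _ hp => intro q; rw [smul_eq_mul, ← mul_assoc, hp]

lemma mem_Oex {m : Fin 2 →₀ ℕ} : m ∈ Oex ↔ (m 0 = 0 ∨ m 1 = 0) ∧ m 0 ≤ 2 ∧ m 1 ≤ 3 := by
  constructor
  · rintro (rfl | rfl | rfl | rfl | rfl | rfl) <;> simp
  · rintro ⟨h01, h0, h1⟩
    obtain ⟨a, b, rfl⟩ : ∃ a b, m = Finsupp.single 0 a + Finsupp.single 1 b :=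
      ⟨m 0, m 1, by ext i; fin_cases i <;> simp⟩
    simp only [Finsupp.coe_add, Pi.add_apply, Finsupp.single_eq_same, ne_eq, zero_ne_one,
      not_false_eq_true, Finsupp.single_eq_of_ne, add_zero, one_ne_zero, zero_add] at h01 h0 h1
    interval_cases a <;> interval_cases b <;> simp_all [Oex]

lemma isOrderIdeal_Oex : IsOrderIdeal Oex :=
  ⟨by simp [Oex], fun t ht t' ht't ↦ by
    rw [mem_Oex] at ht ⊢
    have := ht't 0
    have := ht't 1
    omega⟩

section NormalForm

variable {K : Type*} [Field K]

lemma mem_I18_of_eq {p : MvPolynomial (Fin 2) K} (c₁ c₂ c₃ : MvPolynomial (Fin 2) K)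
    (h : p = c₁ * (X 1 ^ 2 + X 0 * X 1 + X 0 ^ 2) + c₂ * (X 0 * X 1 ^ 2) + c₃ * X 1 ^ 4) :
    p ∈ I18 K := by
  rw [h, I18]
  refine add_mem (add_mem ?_ ?_) ?_ <;> exact Ideal.mul_mem_left _ _ (Ideal.subset_span (by simp))

lemma X_pow_mul_X_pow_mem_I18 {a b : ℕ} (hab : 4 ≤ a + b) :
    (X 0 ^ a * X 1 ^ b : MvPolynomial (Fin 2) K) ∈ I18 K := by
  have mem_of_le : ∀ {c d : ℕ}, c ≤ a → d ≤ b →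
      (X 0 ^ c * X 1 ^ d : MvPolynomial (Fin 2) K) ∈ I18 K → X 0 ^ a * X 1 ^ b ∈ I18 K :=
    fun hc hd ↦
    Ideal.mem_of_dvd _ (mul_dvd_mul (pow_dvd_pow _ hc) (pow_dvd_pow _ hd))
  -- x₁⁴ and x₁³x₂ lie in `I18` because `(x₁ - x₂) g₁ = x₁³ - x₂³`.
  by_cases hb : 4 ≤ b
  · exact mem_of_le (Nat.zero_le a) hb (mem_I18_of_eq 0 0 1 (by ring))
  by_cases ha : 1 ≤ a ∧ 2 ≤ b
  · exact mem_of_le ha.1 ha.2 (mem_I18_of_eq 0 1 0 (by ring))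
  by_cases ha' : 3 ≤ a ∧ 1 ≤ b
  · exact mem_of_le ha'.1 ha'.2 (mem_I18_of_eq (X 1 * (X 0 - X 1)) 0 1 (by ring))
  · exact mem_of_le (c := 4) (d := 0) (by omega) (Nat.zero_le b)
      (mem_I18_of_eq (X 0 * (X 0 - X 1)) (X 1) 0 (by ring))

/-- The normal form of `x₁ᵃ x₂ᵇ` modulo `I18` in the span of `Oex`. -/
noncomputable def monomialNormalForm : ℕ → ℕ → MvPolynomial (Fin 2) K
  | 0, 0 => 1
  | 1, 0 => X 0
  | 0, 1 => X 1
  | 2, 0 => X 0 ^ 2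
  | 0, 2 => X 1 ^ 2
  | 0, 3 => X 1 ^ 3
  | 1, 1 => -(X 0 ^ 2 + X 1 ^ 2)
  | 2, 1 => -(X 1 ^ 3)
  | 3, 0 => X 1 ^ 3
  | _, _ => 0

lemma monomialNormalForm_eq_zero_of_four_le {a b : ℕ} (hab : 4 ≤ a + b) :
    monomialNormalForm (K := K) a b = 0 := by
  unfold monomialNormalForm
  split <;> first | rfl | omega

lemma monomialNormalForm_eq_X_pow_mul_X_pow {a b : ℕ} (h : (a = 0 ∨ b = 0) ∧ a ≤ 2 ∧ b ≤ 3) :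
    monomialNormalForm (K := K) a b = X 0 ^ a * X 1 ^ b := by
  obtain ⟨hab, ha, hb⟩ := h
  interval_cases a <;> interval_cases b <;> simp_all [monomialNormalForm]

lemma X_pow_mul_X_pow_sub_monomialNormalForm_mem (a b : ℕ) :
    X 0 ^ a * X 1 ^ b - monomialNormalForm a b ∈ I18 K := by
  by_cases hab : 4 ≤ a + b
  · rw [monomialNormalForm_eq_zero_of_four_le hab, sub_zero]
    exact X_pow_mul_X_pow_mem_I18 hab
  by_cases hO : (a = 0 ∨ b = 0) ∧ a ≤ 2 ∧ b ≤ 3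
  · rw [monomialNormalForm_eq_X_pow_mul_X_pow hO, sub_self]
    exact zero_mem _
  have ha : a ≤ 3 := by omega
  have hb : b ≤ 3 := by omega
  interval_cases a <;> interval_cases b <;> try omega
  all_goals simp only [monomialNormalForm]
  exacts [mem_I18_of_eq 1 0 0 (by ring), mem_I18_of_eq 0 1 0 (by ring),
    mem_I18_of_eq (X 1) (-1) 0 (by ring), mem_I18_of_eq (X 0 - X 1) 0 0 (by ring)]

lemma X_pow_mul_X_pow_mem_monSpan {a b : ℕ} (h : (a = 0 ∨ b = 0) ∧ a ≤ 2 ∧ b ≤ 3) :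
    X 0 ^ a * X 1 ^ b ∈ monSpan K Oex := by
  refine Submodule.subset_span ⟨Finsupp.single 0 a + Finsupp.single 1 b, mem_Oex.2 ?_, ?_⟩
  · simpa using h
  · simp [monomial_one_eq_X_pow_mul_X_pow]

lemma monomialNormalForm_mem_monSpan (a b : ℕ) : monomialNormalForm a b ∈ monSpan K Oex := by
  by_cases hab : 4 ≤ a + b
  · rw [monomialNormalForm_eq_zero_of_four_le hab]
    exact zero_mem _
  by_cases hO : (a = 0 ∨ b = 0) ∧ a ≤ 2 ∧ b ≤ 3
  · rw [monomialNormalForm_eq_X_pow_mul_X_pow hO]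
    exact X_pow_mul_X_pow_mem_monSpan hO
  have ha : a ≤ 3 := by omega
  have hb : b ≤ 3 := by omega
  have hx₁₁ : X 0 ^ 2 ∈ monSpan K Oex := by
    simpa using X_pow_mul_X_pow_mem_monSpan (K := K) (a := 2) (b := 0) (by simp)
  have hx₂₂ : X 1 ^ 2 ∈ monSpan K Oex := by
    simpa using X_pow_mul_X_pow_mem_monSpan (K := K) (a := 0) (b := 2) (by simp)
  have hx₂₂₂ : X 1 ^ 3 ∈ monSpan K Oex := by
    simpa using X_pow_mul_X_pow_mem_monSpan (K := K) (a := 0) (b := 3) (by simp)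
  interval_cases a <;> interval_cases b <;> try omega
  all_goals simp only [monomialNormalForm]
  exacts [neg_mem (add_mem hx₁₁ hx₂₂), zero_mem _, neg_mem hx₂₂₂, hx₂₂₂]

lemma monomialNormalForm_add_add_eq_zero (a b : ℕ) :
    monomialNormalForm (K := K) a (b + 2) + monomialNormalForm (a + 1) (b + 1) +
      monomialNormalForm (a + 2) b = 0 := by
  by_cases hab : 2 ≤ a + b
  · rw [monomialNormalForm_eq_zero_of_four_le (by omega),
      monomialNormalForm_eq_zero_of_four_le (by omega),
      monomialNormalForm_eq_zero_of_four_le (by omega), add_zero, add_zero]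
  have ha : a ≤ 1 := by omega
  have hb : b ≤ 1 := by omega
  interval_cases a <;> interval_cases b <;> try omega
  all_goals simp only [monomialNormalForm]; ring

noncomputable def normalForm : MvPolynomial (Fin 2) K →ₗ[K] MvPolynomial (Fin 2) K :=
  (basisMonomials (Fin 2) K).constr K fun m ↦ monomialNormalForm (m 0) (m 1)

lemma normalForm_monomial (m : Fin 2 →₀ ℕ) :
    normalForm (monomial m 1) = monomialNormalForm (K := K) (m 0) (m 1) := by
  simpa [normalForm] using
    (basisMonomials (Fin 2) K).constr_basis K (fun m ↦ monomialNormalForm (m 0) (m 1)) m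

lemma normalForm_X_pow_mul_X_pow (a b : ℕ) :
    normalForm (X 0 ^ a * X 1 ^ b) = monomialNormalForm (K := K) a b := by
  have := normalForm_monomial (K := K) (Finsupp.single 0 a + Finsupp.single 1 b)
  rw [monomial_one_eq_X_pow_mul_X_pow] at this
  simpa using this

lemma isProj_normalForm : LinearMap.IsProj (monSpan K Oex) (normalForm (K := K)) := by
  refine ⟨fun p ↦ ?_, fun p hp ↦ ?_⟩
  · have : LinearMap.range (normalForm (K := K)) ≤ monSpan K Oex := by
      rw [normalForm, Module.Basis.constr_range, Submodule.span_le]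
      rintro _ ⟨m, rfl⟩
      exact monomialNormalForm_mem_monSpan _ _
    exact this (LinearMap.mem_range_self _ p)
  · refine LinearMap.eqOn_span' (g := LinearMap.id) ?_ hp
    rintro _ ⟨m, hm, rfl⟩
    dsimp only
    rw [normalForm_monomial, LinearMap.id_apply, monomial_one_eq_X_pow_mul_X_pow]
    exact monomialNormalForm_eq_X_pow_mul_X_pow (mem_Oex.1 hm)

lemma sub_normalForm_mem (p : MvPolynomial (Fin 2) K) : p - normalForm p ∈ I18 K := by
  induction p using MvPolynomial.induction_on' with
  | monomial m c =>
    rw [show monomial m c = c • monomial m (1 : K) by rw [smul_monomial, smul_eq_mul, mul_one],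
      map_smul, ← smul_sub, normalForm_monomial, monomial_one_eq_X_pow_mul_X_pow]
    exact Submodule.smul_of_tower_mem _ c (X_pow_mul_X_pow_sub_monomialNormalForm_mem _ _)
  | add p q hp hq =>
    rw [map_add, add_sub_add_comm]
    exact add_mem hp hq

lemma ker_normalForm : LinearMap.ker (normalForm (K := K)) = (I18 K).restrictScalars K := by
  refine le_antisymm (fun p hp ↦ ?_) (restrictScalars_ideal_span_le_ker _ ?_)
  · simpa [LinearMap.mem_ker.1 hp] using sub_normalForm_mem p
  · rintro m g hg
    rw [monomial_one_eq_X_pow_mul_X_pow]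
    generalize m 0 = a, m 1 = b
    rcases hg with rfl | rfl | rfl
    · rw [show (X 0 ^ a * X 1 ^ b * (X 1 ^ 2 + X 0 * X 1 + X 0 ^ 2) : MvPolynomial (Fin 2) K) =
          X 0 ^ a * X 1 ^ (b + 2) + X 0 ^ (a + 1) * X 1 ^ (b + 1) + X 0 ^ (a + 2) * X 1 ^ b by
          ring]
      simp only [map_add, normalForm_X_pow_mul_X_pow, monomialNormalForm_add_add_eq_zero]
    · rw [show (X 0 ^ a * X 1 ^ b * (X 0 * X 1 ^ 2) : MvPolynomial (Fin 2) K) =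
          X 0 ^ (a + 1) * X 1 ^ (b + 2) by ring, normalForm_X_pow_mul_X_pow]
      rcases Nat.eq_zero_or_pos (a + b) with hab | hab
      · obtain ⟨rfl, rfl⟩ : a = 0 ∧ b = 0 := by omega
        rfl
      · exact monomialNormalForm_eq_zero_of_four_le (by omega)
    · rw [show (X 0 ^ a * X 1 ^ b * X 1 ^ 4 : MvPolynomial (Fin 2) K) = X 0 ^ a * X 1 ^ (b + 4) by
          ring, normalForm_X_pow_mul_X_pow, monomialNormalForm_eq_zero_of_four_le (by omega)]

lemma isCompl_I18_monSpan_Oex : IsCompl ((I18 K).restrictScalars K) (monSpan K Oex) :=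
  ker_normalForm (K := K) ▸ isProj_normalForm.isCompl.symm

end NormalForm

lemma IsTermOrder.add_le_add {r : (Fin 2 →₀ ℕ) → (Fin 2 →₀ ℕ) → Prop} (hr : IsTermOrder r)
    {a b c d : Fin 2 →₀ ℕ} (hab : r a b) (hcd : r c d) : r (a + c) (b + d) := by
  obtain ⟨hlin, hadd, -⟩ := hr
  have hbd := hadd c d b hcd
  rw [add_comm c, add_comm d] at hbd
  exact hlin.trans _ _ _ (hadd a b c hab) hbd

lemma monomial_mem_LTIdeal {K : Type*} [Field K] {r : (Fin 2 →₀ ℕ) → (Fin 2 →₀ ℕ) → Prop}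
    {I : Ideal (MvPolynomial (Fin 2) K)} {p : MvPolynomial (Fin 2) K} (hp : p ∈ I)
    {m : Fin 2 →₀ ℕ} (hm : m ∈ p.support) (hmax : ∀ m' ∈ p.support, r m' m) :
    monomial m 1 ∈ LTIdeal K r I :=
  Ideal.subset_span ⟨m, ⟨p, hp, mt support_eq_empty.2 (Finset.ne_empty_of_mem hm), hm, hmax⟩, rfl⟩

section LeadingMonomial

variable {K : Type*} [Field K]

lemma X_one_sq_add_X_zero_mul_X_one_add_X_zero_sq_eq :
    (X 1 ^ 2 + X 0 * X 1 + X 0 ^ 2 : MvPolynomial (Fin 2) K) =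
      monomial (Finsupp.single 1 1 + Finsupp.single 1 1) 1 +
        monomial (Finsupp.single 0 1 + Finsupp.single 1 1) 1 +
          monomial (Finsupp.single 0 1 + Finsupp.single 0 1) 1 := by
  simp only [sq, X, monomial_mul, mul_one]

lemma IsTermOrder.exists_sq_isGreatest {r : (Fin 2 →₀ ℕ) → (Fin 2 →₀ ℕ) → Prop}
    (hr : IsTermOrder r) {s : Finset (Fin 2 →₀ ℕ)} {x y : Fin 2 →₀ ℕ}
    (hs : s ⊆ {x + x, x + y, y + y}) (hx : x + x ∈ s) (hy : y + y ∈ s) :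
    ∃ m ∈ ({x + x, y + y} : Set (Fin 2 →₀ ℕ)), m ∈ s ∧ ∀ m' ∈ s, r m' m := by
  have hrefl := hr.1.refl
  rcases hr.1.total x y with hxy | hyx
  · refine ⟨y + y, by simp, hy, fun m' hm' ↦ ?_⟩
    have := hs hm'
    simp only [Finset.mem_insert, Finset.mem_singleton] at this
    rcases this with rfl | rfl | rfl
    exacts [hr.add_le_add hxy hxy, hr.add_le_add hxy (hrefl y), hrefl _]
  · refine ⟨x + x, by simp, hx, fun m' hm' ↦ ?_⟩
    have := hs hm'
    simp only [Finset.mem_insert, Finset.mem_singleton] at this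
    rcases this with rfl | rfl | rfl
    exacts [hrefl _, hr.add_le_add (hrefl x) hyx, hr.add_le_add hyx hyx]

lemma exists_mem_Oex_isLeading {r : (Fin 2 →₀ ℕ) → (Fin 2 →₀ ℕ) → Prop} (hr : IsTermOrder r) :
    ∃ m ∈ Oex, m ∈ (X 1 ^ 2 + X 0 * X 1 + X 0 ^ 2 : MvPolynomial (Fin 2) K).support ∧
      ∀ m' ∈ (X 1 ^ 2 + X 0 * X 1 + X 0 ^ 2 : MvPolynomial (Fin 2) K).support, r m' m := by
  rw [X_one_sq_add_X_zero_mul_X_one_add_X_zero_sq_eq]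
  have hsq : ({Finsupp.single 0 1 + Finsupp.single 0 1, Finsupp.single 1 1 + Finsupp.single 1 1} :
      Set (Fin 2 →₀ ℕ)) ⊆ Oex := by
    simp [Set.insert_subset_iff, Oex, ← Finsupp.single_add]
  refine Exists.imp (fun m ⟨hm, hmp⟩ ↦ ⟨hsq hm, hmp⟩) (hr.exists_sq_isGreatest ?_ ?_ ?_)
  · refine support_add.trans <|
      Finset.union_subset (support_add.trans (Finset.union_subset ?_ ?_)) ?_ <;>
    exact support_monomial_subset.trans (by simp)
  all_goals
    rw [mem_support_iff]
    simp [coeff_monomial, Finsupp.ext_iff, Fin.forall_fin_two]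

end LeadingMonomial

theorem orderIdeal_not_from_termOrder_general {K : Type*} [Field K] :
    IsOrderIdeal Oex ∧
    IsCompl (Submodule.restrictScalars K (I18 K)) (monSpan K Oex) ∧
    ¬ ∃ r : (Fin 2 →₀ ℕ) → (Fin 2 →₀ ℕ) → Prop, IsTermOrder r ∧
        Oex = {m : Fin 2 →₀ ℕ | monomial m (1 : K) ∉ LTIdeal K r (I18 K)} := by
  refine ⟨isOrderIdeal_Oex, isCompl_I18_monSpan_Oex, ?_⟩
  rintro ⟨r, hr, hOex⟩
  obtain ⟨m, hmO, hm, hmax⟩ := exists_mem_Oex_isLeading (K := K) hr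
  have hg : (X 1 ^ 2 + X 0 * X 1 + X 0 ^ 2 : MvPolynomial (Fin 2) K) ∈ I18 K :=
    mem_I18_of_eq 1 0 0 (by ring)
  exact (hOex ▸ hmO : m ∈ {m | monomial m (1 : K) ∉ LTIdeal K r (I18 K)})
    (monomial_mem_LTIdeal hg hm hmax)

/-- `O' = {1, x_1, x_2, x_1², x_2², x_2³}` is an order ideal
supporting a border basis of `I = ⟨x_2²+x_1x_2+x_1², x_1x_2², x_2⁴⟩`, yet
there is no term ordering `σ` with `O'` equal to the set of monomials outside
the leading term ideal `⟨LT_σ(I)⟩`. -/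
theorem orderIdeal_not_from_termOrder {K : Type*} [Field K] [CharZero K] :
    IsOrderIdeal Oex ∧
    IsCompl (Submodule.restrictScalars K (I18 K)) (monSpan K Oex) ∧
    ¬ ∃ r : (Fin 2 →₀ ℕ) → (Fin 2 →₀ ℕ) → Prop, IsTermOrder r ∧
        Oex = {m : Fin 2 →₀ ℕ | monomial m (1 : K) ∉ LTIdeal K r (I18 K)} :=
  orderIdeal_not_from_termOrder_general
end
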